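/- arXiv:1902.02871 — 2 statements merged into one kernel-verified Lean document; each statement's English description precedes it below -/
import Mathlib

section
/- Suppose w(l,s) ≥ 0 for all arguments. Then along the Kantowski-Sachs flow, H_D' < 0 at every point of the state space with H_D ∈ (-1,1), Σ₊ ∈ (-1,1). In particular H_D is strictly monotonically decreasing along orbits in the interior of the state space. -/
/-! Since `H_D² < 1`, the sign of `H_D'` is minus that of `q - H_D Σ₊`. Using `w ≥ 0`,
`|H_D| ≤ 1` and `Ω = 1 - Σ₊² ≥ 0`, we get
`q - H_D Σ₊ ≥ 2Σ₊² - |Σ₊| + ½(1 - Σ₊²) = (3/2)(|Σ₊| - 1/3)² + 1/3 > 0`. -/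

lemma two_mul_sq_sub_abs_add_half_one_sub_sq_pos (x : ℝ) :
    0 < 2 * x ^ 2 - |x| + (1 / 2) * (1 - x ^ 2) := by
  nlinarith [sq_nonneg (|x| - 1 / 3), sq_abs x]

lemma mul_le_abs_of_abs_le_one {a b : ℝ} (ha : |a| ≤ 1) : a * b ≤ |b| :=
  calc a * b ≤ |a * b| := le_abs_self _
    _ = |a| * |b| := abs_mul a b
    _ ≤ 1 * |b| := by gcongr
    _ = |b| := one_mul _

lemma deceleration_sub_mul_pos {H Sp w : ℝ} (hH : |H| ≤ 1) (hSp : Sp ^ 2 ≤ 1) (hw : 0 ≤ w) :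
    0 < 2 * Sp ^ 2 + (1 / 2) * (1 + 3 * w) * (1 - Sp ^ 2) - H * Sp := by
  have hmatter : (1 / 2) * (1 - Sp ^ 2) ≤ (1 / 2) * (1 + 3 * w) * (1 - Sp ^ 2) := by
    nlinarith [mul_nonneg hw (sub_nonneg.mpr hSp)]
  have hshear := mul_le_abs_of_abs_le_one (b := Sp) hH
  linarith [two_mul_sq_sub_abs_add_half_one_sub_sq_pos Sp]

/-- If the isotropic pressure w(l,s) is nonnegative, then H_D' < 0 at every point of the
state space with H_D ∈ (-1,1), Σ₊ ∈ (-1,1); hence H_D is strictly decreasing along orbits. -/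
theorem stmt_3 (w : ℝ → ℝ → ℝ) (hw : ∀ l s, 0 ≤ w l s)
    (H Sp M l : ℝ) (hH : H ∈ Set.Ioo (-1 : ℝ) 1) (hS : Sp ∈ Set.Ioo (-1 : ℝ) 1) :
    -(1 - H ^ 2) *
      ((2 * Sp ^ 2 + (1 / 2) * (1 + 3 * w l (1 / (2 + 3 * (1 - H ^ 2) / M ^ 2))) *
        (1 - Sp ^ 2)) - H * Sp) < 0 := by
  have hH_abs : |H| < 1 := abs_lt.mpr hH
  have hSp_sq : Sp ^ 2 < 1 := (sq_lt_one_iff_abs_lt_one Sp).mpr (abs_lt.mpr hS)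
  have hH_sq : H ^ 2 < 1 := (sq_lt_one_iff_abs_lt_one H).mpr hH_abs
  exact mul_neg_of_neg_of_pos (by linarith)
    (deceleration_sub_mul_pos hH_abs.le hSp_sq.le (hw _ _))
end

section
/- Any solution of the scalar ODE Σ₊' = -½(1-Σ₊²)(2Σ₊-1) with initial value in (-1, 1) converges to 1/2 as τ → +∞, and converges to -1 (if the initial value is in (-1,1/2)) or to 1 (if in (1/2,1)), or stays at 1/2, as τ → -∞. -/
/-!
The factors `1 - x²` and `x - 1/2` of the right-hand side each satisfy a linear equation
`u' = k(t) u`, so their signs never change: a solution starting in `(-1, 1)` stays in one of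
`(-1, 1/2)`, `{1/2}`, `(1/2, 1)`. On the two open intervals the field has a constant sign, so the
solution is monotone and bounded and converges at `±∞`; a limit of a solution of `x' = f(x)` is a
zero of `f`, which forces the limits to be the endpoints of the interval.
-/

open Filter Topology Set

theorem eq_zero_of_tendsto_of_tendsto_deriv {x x' : ℝ → ℝ} {L c : ℝ}
    (hx : ∀ t, HasDerivAt x (x' t) t) (hL : Tendsto x atTop (𝓝 L))
    (hc : Tendsto x' atTop (𝓝 c)) : c = 0 := by
  wlog hpos : 0 < c generalizing x x' L c
  · rcases (not_lt.mp hpos).lt_or_eq with hneg | rfl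
    · have := this (fun t => (hx t).neg) hL.neg hc.neg (neg_pos.mpr hneg)
      linarith
    · rfl
  obtain ⟨T, hT⟩ := eventually_atTop.mp (hc.eventually (Ioi_mem_nhds (half_lt_self hpos)))
  have hlin : ∀ t ≥ T, c / 2 * (t - T) ≤ x t - x T := fun t ht =>
    (convex_Ici T).mul_sub_le_image_sub_of_le_deriv
      (fun s _ => (hx s).continuousAt.continuousWithinAt)
      (fun s _ => (hx s).differentiableAt.differentiableWithinAt)
      (fun s hs => (hx s).deriv ▸ (hT s (interior_subset hs)).le) T self_mem_Ici t ht ht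
  have hgrow : Tendsto (fun t => c / 2 * (t - T) + x T) atTop atTop :=
    tendsto_atTop_add_const_right _ _
      ((tendsto_atTop_add_const_right _ _ tendsto_id).const_mul_atTop (half_pos hpos))
  exact absurd hL (not_tendsto_nhds_of_tendsto_atTop (tendsto_atTop_mono' _
    ((eventually_ge_atTop T).mono fun t ht => by linarith [hlin t ht]) hgrow) L)

theorem tendsto_atTop_of_pos_on_Ioo {f x : ℝ → ℝ} {a b : ℝ}
    (hf : ContinuousOn f (Ioo a b)) (hx : ∀ t, HasDerivAt x (f (x t)) t)
    (hmem : ∀ t, x t ∈ Ioo a b) (hpos : ∀ y ∈ Ioo a b, 0 < f y) :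
    Tendsto x atTop (𝓝 b) := by
  have hmono : Monotone x :=
    monotone_of_hasDerivAt_nonneg hx fun t => (hpos _ (hmem t)).le
  have hbdd : BddAbove (range x) := ⟨b, by rintro _ ⟨t, rfl⟩; exact (hmem t).2.le⟩
  have hlim := tendsto_atTop_ciSup hmono hbdd
  rcases (ciSup_le fun t => (hmem t).2.le).lt_or_eq with hlt | heq
  · have hL : ⨆ t, x t ∈ Ioo a b := ⟨(hmem 0).1.trans_le (le_ciSup hbdd 0), hlt⟩
    exact absurd (eq_zero_of_tendsto_of_tendsto_deriv hx hlim
      ((hf.continuousAt (Ioo_mem_nhds hL.1 hL.2)).tendsto.comp hlim)) (hpos _ hL).ne'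
  · rwa [heq] at hlim

theorem tendsto_atTop_of_neg_on_Ioo {f x : ℝ → ℝ} {a b : ℝ}
    (hf : ContinuousOn f (Ioo a b)) (hx : ∀ t, HasDerivAt x (f (x t)) t)
    (hmem : ∀ t, x t ∈ Ioo a b) (hneg : ∀ y ∈ Ioo a b, f y < 0) :
    Tendsto x atTop (𝓝 a) := by
  have hIoo : MapsTo Neg.neg (Ioo (-b) (-a)) (Ioo a b) := fun y hy =>
    ⟨lt_neg_of_lt_neg hy.2, neg_lt.mp hy.1⟩
  have := tendsto_atTop_of_pos_on_Ioo (f := fun y => -f (-y)) (x := fun t => -x t)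
    (hf.comp continuousOn_neg hIoo).neg (fun t => by simpa only [neg_neg] using (hx t).fun_neg)
    (fun t => ⟨neg_lt_neg (hmem t).2, neg_lt_neg (hmem t).1⟩)
    (fun y hy => neg_pos.mpr (hneg _ (hIoo hy)))
  simpa using this.neg

theorem hasDerivAt_comp_neg_of_autonomous {f x : ℝ → ℝ} (hx : ∀ t, HasDerivAt x (f (x t)) t)
    (t : ℝ) : HasDerivAt (fun s => x (-s)) (-f (x (-t))) t :=
  ((hx (-t)).comp t (hasDerivAt_neg t)).congr_deriv (mul_neg_one _)

theorem tendsto_atBot_of_tendsto_comp_neg {x : ℝ → ℝ} {l : Filter ℝ}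
    (h : Tendsto (fun s => x (-s)) atTop l) : Tendsto x atBot l := by
  simpa [Function.comp_def] using h.comp tendsto_neg_atBot_atTop

theorem tendsto_atBot_of_pos_on_Ioo {f x : ℝ → ℝ} {a b : ℝ}
    (hf : ContinuousOn f (Ioo a b)) (hx : ∀ t, HasDerivAt x (f (x t)) t)
    (hmem : ∀ t, x t ∈ Ioo a b) (hpos : ∀ y ∈ Ioo a b, 0 < f y) :
    Tendsto x atBot (𝓝 a) :=
  tendsto_atBot_of_tendsto_comp_neg <| tendsto_atTop_of_neg_on_Ioo hf.neg
    (hasDerivAt_comp_neg_of_autonomous hx) (fun t => hmem (-t))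
    (fun y hy => neg_neg_of_pos (hpos y hy))

theorem tendsto_atBot_of_neg_on_Ioo {f x : ℝ → ℝ} {a b : ℝ}
    (hf : ContinuousOn f (Ioo a b)) (hx : ∀ t, HasDerivAt x (f (x t)) t)
    (hmem : ∀ t, x t ∈ Ioo a b) (hneg : ∀ y ∈ Ioo a b, f y < 0) :
    Tendsto x atBot (𝓝 b) :=
  tendsto_atBot_of_tendsto_comp_neg <| tendsto_atTop_of_pos_on_Ioo hf.neg
    (hasDerivAt_comp_neg_of_autonomous hx) (fun t => hmem (-t))
    (fun y hy => neg_pos.mpr (hneg y hy))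

theorem eq_mul_exp_integral_of_hasDerivAt_mul {u k : ℝ → ℝ} (hk : Continuous k)
    (hu : ∀ t, HasDerivAt u (k t * u t) t) (t : ℝ) :
    u t = u 0 * Real.exp (∫ s in (0 : ℝ)..t, k s) := by
  set K : ℝ → ℝ := fun t => ∫ s in (0 : ℝ)..t, k s
  have hw : ∀ t, HasDerivAt (fun t => u t * Real.exp (-K t)) 0 t := fun t =>
    ((hu t).mul (hk.integral_hasStrictDerivAt 0 t).hasDerivAt.neg.exp).congr_deriv (by ring)
  have hconst := is_const_of_deriv_eq_zero (fun s => (hw s).differentiableAt)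
    (fun s => (hw s).deriv) t 0
  simp only [K, intervalIntegral.integral_same, neg_zero, Real.exp_zero, mul_one] at hconst
  rw [← hconst, mul_assoc, ← Real.exp_add, neg_add_cancel, Real.exp_zero, mul_one]

theorem sign_eq_of_hasDerivAt_mul {u k : ℝ → ℝ} (hk : Continuous k)
    (hu : ∀ t, HasDerivAt u (k t * u t) t) (t : ℝ) :
    SignType.sign (u t) = SignType.sign (u 0) := by
  rw [eq_mul_exp_integral_of_hasDerivAt_mul hk hu, sign_mul, sign_pos (Real.exp_pos _), mul_one]

noncomputable def sigmaField (y : ℝ) : ℝ := -(1 / 2) * (1 - y ^ 2) * (2 * y - 1)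

theorem continuous_sigmaField : Continuous sigmaField := by
  unfold sigmaField; fun_prop

theorem sigmaField_pos {y : ℝ} (hy : y ∈ Ioo (-1 : ℝ) (1 / 2)) : 0 < sigmaField y := by
  have h : 0 < (1 - y ^ 2) * (1 - 2 * y) := mul_pos (by nlinarith [hy.1, hy.2]) (by linarith [hy.2])
  unfold sigmaField; linarith

theorem sigmaField_neg {y : ℝ} (hy : y ∈ Ioo (1 / 2 : ℝ) 1) : sigmaField y < 0 := by
  have h : 0 < (1 - y ^ 2) * (2 * y - 1) := mul_pos (by nlinarith [hy.1, hy.2]) (by linarith [hy.1])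
  unfold sigmaField; linarith

section

variable {x : ℝ → ℝ} (hx : ∀ t, HasDerivAt x (sigmaField (x t)) t)
include hx

theorem sign_one_sub_sq_eq (t : ℝ) :
    SignType.sign (1 - x t ^ 2) = SignType.sign (1 - x 0 ^ 2) :=
  sign_eq_of_hasDerivAt_mul (k := fun t => 2 * x t ^ 2 - x t)
    (by have := continuous_iff_continuousAt.2 fun t => (hx t).continuousAt; fun_prop)
    (fun t => (((hx t).fun_pow 2).const_sub 1).congr_deriv (by unfold sigmaField; ring)) t

theorem sign_sub_half_eq (t : ℝ) :
    SignType.sign (x t - 1 / 2) = SignType.sign (x 0 - 1 / 2) :=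
  sign_eq_of_hasDerivAt_mul (k := fun t => x t ^ 2 - 1)
    (by have := continuous_iff_continuousAt.2 fun t => (hx t).continuousAt; fun_prop)
    (fun t => ((hx t).sub_const (1 / 2)).congr_deriv (by unfold sigmaField; ring)) t

theorem mem_Ioo_neg_one_one (h0 : x 0 ∈ Ioo (-1 : ℝ) 1) (t : ℝ) : x t ∈ Ioo (-1 : ℝ) 1 := by
  have h : 0 < 1 - x t ^ 2 := sign_eq_one_iff.mp <| (sign_one_sub_sq_eq hx t).trans <|
    sign_pos (by nlinarith [h0.1, h0.2])
  constructor <;> nlinarith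

theorem mem_Ioo_neg_one_half (h0 : x 0 ∈ Ioo (-1 : ℝ) (1 / 2)) (t : ℝ) :
    x t ∈ Ioo (-1 : ℝ) (1 / 2) := by
  have h : x t - 1 / 2 < 0 := sign_eq_neg_one_iff.mp <| (sign_sub_half_eq hx t).trans <|
    sign_neg (by linarith [h0.2])
  exact ⟨(mem_Ioo_neg_one_one hx ⟨h0.1, by linarith [h0.2]⟩ t).1, by linarith⟩

theorem mem_Ioo_half_one (h0 : x 0 ∈ Ioo (1 / 2 : ℝ) 1) (t : ℝ) : x t ∈ Ioo (1 / 2 : ℝ) 1 := by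
  have h : 0 < x t - 1 / 2 := sign_eq_one_iff.mp <| (sign_sub_half_eq hx t).trans <|
    sign_pos (by linarith [h0.1])
  exact ⟨by linarith, (mem_Ioo_neg_one_one hx ⟨by linarith [h0.1], h0.2⟩ t).2⟩

theorem eq_half_of_eq_half (h0 : x 0 = 1 / 2) (t : ℝ) : x t = 1 / 2 := by
  have h := sign_sub_half_eq hx t
  rwa [h0, sub_self, sign_zero, sign_eq_zero_iff, sub_eq_zero] at h

end

/-- Any solution of Σ₊' = -½(1-Σ₊²)(2Σ₊-1) with initial value in (-1,1) converges to 1/2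
as τ → +∞; as τ → -∞ it converges to -1 if it starts in (-1,1/2), to 1 if it starts in
(1/2,1), and it stays at 1/2 if it starts there. -/
theorem stmt_11 (x : ℝ → ℝ)
    (hx : ∀ τ, HasDerivAt x (-(1 / 2) * (1 - x τ ^ 2) * (2 * x τ - 1)) τ)
    (h0 : x 0 ∈ Set.Ioo (-1 : ℝ) 1) :
    Tendsto x atTop (nhds (1 / 2)) ∧
    (x 0 ∈ Set.Ioo (-1 : ℝ) (1 / 2) → Tendsto x atBot (nhds (-1))) ∧
    (x 0 ∈ Set.Ioo (1 / 2 : ℝ) 1 → Tendsto x atBot (nhds 1)) ∧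
    (x 0 = 1 / 2 → ∀ τ, x τ = 1 / 2) := by
  replace hx : ∀ τ, HasDerivAt x (sigmaField (x τ)) τ := hx
  have hf {s : Set ℝ} : ContinuousOn sigmaField s := continuous_sigmaField.continuousOn
  rcases lt_trichotomy (x 0) (1 / 2) with hlt | heq | hgt
  · have hmem := mem_Ioo_neg_one_half hx ⟨h0.1, hlt⟩
    exact ⟨tendsto_atTop_of_pos_on_Ioo hf hx hmem fun _ => sigmaField_pos,
      fun _ => tendsto_atBot_of_pos_on_Ioo hf hx hmem fun _ => sigmaField_pos,
      fun h => absurd h.1 hlt.not_gt, fun h => absurd h hlt.ne⟩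
  · have hconst : x = fun _ => 1 / 2 := funext (eq_half_of_eq_half hx heq)
    subst hconst
    exact ⟨tendsto_const_nhds, fun h => absurd h.2 (lt_irrefl _),
      fun h => absurd h.1 (lt_irrefl _), fun _ _ => rfl⟩
  · have hmem := mem_Ioo_half_one hx ⟨hgt, h0.2⟩
    exact ⟨tendsto_atTop_of_neg_on_Ioo hf hx hmem fun _ => sigmaField_neg,
      fun h => absurd h.2 hgt.not_gt,
      fun _ => tendsto_atBot_of_neg_on_Ioo hf hx hmem fun _ => sigmaField_neg,
      fun h => absurd h hgt.ne'⟩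
end
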